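/- A function Bel: 2^Ω → [0,1] is a belief function if and only if there exists a basic belief assignment m with Bel(A) = Σ_{S⊆A} m(S) for all A; moreover this correspondence is one-to-one, and Bel is a probability distribution if and only if m is supported on singletons. -/
import Mathlib


open scoped Classical

variable {Ω : Type*}

/-- A betting function: for each bet `X` there is a threshold `α₀` such that the
agent rejects `X + α` for `α < α₀` and accepts it for `α ≥ α₀`. -/
def IsBettingFunction (R : (Ω → ℝ) → Bool) : Prop :=
  ∀ X : Ω → ℝ, ∃ α₀ : ℝ,
    (∀ α : ℝ, α < α₀ → R (fun ω => X ω + α) = false) ∧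
    (∀ α : ℝ, α₀ ≤ α → R (fun ω => X ω + α) = true)

/-- The buy function: maximum price the agent pays for `X`. -/
noncomputable def Buy (R : (Ω → ℝ) → Bool) (X : Ω → ℝ) : ℝ :=
  sSup {α : ℝ | R (fun ω => X ω - α) = true}

/-- The sell function: minimum price at which the agent sells `X`. -/
noncomputable def Sell (R : (Ω → ℝ) → Bool) (X : Ω → ℝ) : ℝ :=
  sInf {α : ℝ | R (fun ω => α - X ω) = true}

/-- Coherence of a betting function. -/
def Coherent (R : (Ω → ℝ) → Bool) : Prop :=
  (∀ X : Ω → ℝ, (∀ ω, 0 < X ω) → R X = true) ∧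
  (∀ (X : Ω → ℝ) (c : ℝ), 0 < c → R (fun ω => c * X ω) = R X) ∧
  (∀ X Y : Ω → ℝ, R X = true → R Y = true → R (fun ω => X ω + Y ω) = true)

/-- Indicator bet of a set. -/
noncomputable def ind (A : Set Ω) : Ω → ℝ := A.indicator fun _ => 1

/-- A belief valuation. -/
def BeliefValuation (B : Set Ω → Bool) : Prop :=
  (∀ A : Set Ω, B A = true → B Aᶜ = false) ∧
  (∀ A C : Set Ω, B A = true → A ⊆ C → B C = true) ∧
  (∀ A C : Set Ω, B A = true → B C = true → B (A ∩ C) = true) ∧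
  B Set.univ = true

/-- Guaranteed revenue of a bet under a belief valuation. -/
noncomputable def GB (B : Set Ω → Bool) (X : Ω → ℝ) : ℝ :=
  sSup ((fun A => sInf (X '' A)) '' {A | B A = true})

/-- P-consistency: compare guaranteed revenues of combined bets. -/
def PConsistent (R : (Ω → ℝ) → Bool) : Prop :=
  ∀ (N M : ℕ) (X : Fin N → Ω → ℝ) (Y : Fin M → Ω → ℝ),
    (∀ E : Set Ω, E.Nonempty →
      sInf ((fun ω => ∑ i, X i ω) '' E) ≤ sInf ((fun ω => ∑ j, Y j ω) '' E)) →
    ∑ i, Buy R (X i) ≤ ∑ j, Buy R (Y j)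

/-- B-consistency: compare sums of guaranteed revenues of individual bets. -/
def BConsistent (R : (Ω → ℝ) → Bool) : Prop :=
  ∀ (N M : ℕ) (X : Fin N → Ω → ℝ) (Y : Fin M → Ω → ℝ),
    (∀ E : Set Ω, E.Nonempty →
      ∑ i, sInf (X i '' E) ≤ ∑ j, sInf (Y j '' E)) →
    ∑ i, Buy R (X i) ≤ ∑ j, Buy R (Y j)

/-- A (finitely additive) probability distribution with values in `[0,1]`. -/
def IsProbDist (P : Set Ω → ℝ) : Prop :=
  (∀ A : Set Ω, 0 ≤ P A ∧ P A ≤ 1) ∧ P ∅ = 0 ∧ P Set.univ = 1 ∧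
  ∀ A C : Set Ω, P (A ∪ C) = P A + P C - P (A ∩ C)

/-- A basic belief assignment. -/
def IsBBA [Fintype Ω] (m : Finset Ω → ℝ) : Prop :=
  (∀ S : Finset Ω, 0 ≤ m S ∧ m S ≤ 1) ∧ m ∅ = 0 ∧ ∑ S : Finset Ω, m S = 1

/-- Choquet integral of `X` with respect to the bba `m`. -/
noncomputable def Choquet [Fintype Ω] (m : Finset Ω → ℝ) (X : Ω → ℝ) : ℝ :=
  ∑ S : Finset Ω, m S * sInf (X '' (S : Set Ω))

/-- The belief function induced by a bba. -/
noncomputable def BelOf [Fintype Ω] (m : Finset Ω → ℝ) (A : Set Ω) : ℝ :=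
  ∑ S ∈ Finset.univ.filter (fun S : Finset Ω => (S : Set Ω) ⊆ A), m S

/-- Complete monotonicity (condition (B2)). -/
def CompletelyMonotone (Bel : Set Ω → ℝ) : Prop :=
  ∀ (N : ℕ) (A : Fin N → Set Ω),
    ∑ I ∈ (Finset.univ : Finset (Finset (Fin N))).filter (fun I => I ≠ ∅),
      (-1 : ℝ) ^ (I.card + 1) * Bel (⋂ i ∈ I, A i) ≤ Bel (⋃ i, A i)

/-- Shafer belief function. -/
def IsBeliefFunction (Bel : Set Ω → ℝ) : Prop :=
  (∀ A : Set Ω, 0 ≤ Bel A ∧ Bel A ≤ 1) ∧ Bel ∅ = 0 ∧ Bel Set.univ = 1 ∧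
  CompletelyMonotone Bel



lemma psum1 (W : Finset Ω) : ∑ V ∈ W.powerset, (-1:ℝ)^V.card = if W = ∅ then 1 else 0 := by
  have h := Finset.sum_powerset_neg_one_pow_card (x := W)
  calc ∑ V ∈ W.powerset, (-1:ℝ)^V.card
      = ((∑ V ∈ W.powerset, (-1:ℤ)^V.card : ℤ) : ℝ) := by push_cast; rfl
    _ = _ := by rw [h]; split <;> norm_num

lemma psum2 (W : Finset Ω) : ∑ V ∈ W.powerset, (-1:ℝ)^(W.card - V.card) = if W = ∅ then 1 else 0 := by
  have h : ∀ V ∈ W.powerset, (-1:ℝ)^(W.card - V.card) = (-1:ℝ)^W.card * (-1:ℝ)^V.card := by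
    intro V hV
    rw [Finset.mem_powerset] at hV
    have hle := Finset.card_le_card hV
    rw [← pow_add]
    have h2 : (-1:ℝ)^(W.card - V.card) * ((-1:ℝ)^(2*V.card)) = (-1:ℝ)^(W.card - V.card) := by
      rw [pow_mul]; norm_num
    rw [← h2, ← pow_add]
    congr 1
    omega
  rw [Finset.sum_congr rfl h, ← Finset.mul_sum, psum1]
  split
  · next heq => subst heq; simp
  · ring

lemma sum_between (T U : Finset Ω) (hU : U ⊆ T) (f : Finset Ω → ℝ) :
    ∑ S ∈ T.powerset.filter (fun S => U ⊆ S), f S = ∑ V ∈ (T \ U).powerset, f (U ∪ V) := by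
  refine Finset.sum_nbij' (fun S => S \ U) (fun V => U ∪ V) ?_ ?_ ?_ ?_ ?_
  · intro S hS
    simp only [Finset.mem_filter, Finset.mem_powerset] at hS ⊢
    exact Finset.sdiff_subset_sdiff hS.1 (le_refl _)
  · intro V hV
    simp only [Finset.mem_filter, Finset.mem_powerset] at hV ⊢
    constructor
    · exact Finset.union_subset hU (hV.trans Finset.sdiff_subset)
    · exact Finset.subset_union_left
  · intro S hS
    simp only [Finset.mem_filter, Finset.mem_powerset] at hS
    exact Finset.union_sdiff_of_subset hS.2
  · intro V hV
    simp only [Finset.mem_powerset] at hV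
    show (U ∪ V) \ U = V
    rw [Finset.union_sdiff_cancel_left]
    exact Finset.disjoint_left.2 fun a haU haV => (Finset.mem_sdiff.1 (hV haV)).2 haU
  · intro S hS
    simp only [Finset.mem_filter, Finset.mem_powerset] at hS
    rw [Finset.union_sdiff_of_subset hS.2]

lemma sdiff_empty_iff (T U : Finset Ω) (hU : U ⊆ T) : T \ U = ∅ ↔ U = T := by
  rw [Finset.sdiff_eq_empty_iff_subset]
  exact ⟨fun h => subset_antisymm hU h, fun h => h ▸ subset_refl T⟩

lemma inner1 (T U : Finset Ω) (hU : U ⊆ T) :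
    ∑ S ∈ T.powerset.filter (fun S => U ⊆ S), (-1:ℝ)^(S.card - U.card)
      = if U = T then 1 else 0 := by
  rw [sum_between T U hU]
  have h : ∀ V ∈ (T \ U).powerset, (-1:ℝ)^((U ∪ V).card - U.card) = (-1:ℝ)^V.card := by
    intro V hV
    rw [Finset.mem_powerset] at hV
    have hd : Disjoint U V :=
      Finset.disjoint_left.2 fun a haU haV => (Finset.mem_sdiff.1 (hV haV)).2 haU
    rw [Finset.card_union_of_disjoint hd]
    congr 1
    omega
  rw [Finset.sum_congr rfl h, psum1]
  simp only [sdiff_empty_iff T U hU]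

lemma inner2 (T U : Finset Ω) (hU : U ⊆ T) :
    ∑ S ∈ T.powerset.filter (fun S => U ⊆ S), (-1:ℝ)^(T.card - S.card)
      = if U = T then 1 else 0 := by
  rw [sum_between T U hU]
  have h : ∀ V ∈ (T \ U).powerset, (-1:ℝ)^(T.card - (U ∪ V).card)
      = (-1:ℝ)^((T \ U).card - V.card) := by
    intro V hV
    rw [Finset.mem_powerset] at hV
    have hd : Disjoint U V :=
      Finset.disjoint_left.2 fun a haU haV => (Finset.mem_sdiff.1 (hV haV)).2 haU
    have hVc := Finset.card_le_card hV
    rw [Finset.card_union_of_disjoint hd, Finset.card_sdiff_of_subset hU] at *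
    congr 1
    have := Finset.card_le_card hU
    omega
  rw [Finset.sum_congr rfl h, psum2]
  simp only [sdiff_empty_iff T U hU]

lemma swap_sum (T : Finset Ω) (f : Finset Ω → Finset Ω → ℝ) :
    ∑ S ∈ T.powerset, ∑ U ∈ S.powerset, f S U
      = ∑ U ∈ T.powerset, ∑ S ∈ T.powerset.filter (fun S => U ⊆ S), f S U := by
  refine Finset.sum_comm' ?_
  intro S U
  simp only [Finset.mem_powerset, Finset.mem_filter]
  constructor
  · rintro ⟨h1, h2⟩; exact ⟨⟨h1, h2⟩, h2.trans h1⟩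
  · rintro ⟨⟨h1, h2⟩, -⟩; exact ⟨h1, h2⟩

lemma inv1 (g : Finset Ω → ℝ) (T : Finset Ω) :
    ∑ S ∈ T.powerset, ∑ U ∈ S.powerset, (-1:ℝ)^(S.card - U.card) * g U = g T := by
  rw [swap_sum]
  have h : ∀ U ∈ T.powerset, ∑ S ∈ T.powerset.filter (fun S => U ⊆ S),
      (-1:ℝ)^(S.card - U.card) * g U = (if U = T then 1 else 0) * g U := by
    intro U hU
    rw [← Finset.sum_mul, inner1 T U (Finset.mem_powerset.1 hU)]
  rw [Finset.sum_congr rfl h]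
  simp only [ite_mul, one_mul, zero_mul, Finset.sum_ite_eq', Finset.mem_powerset]
  rw [if_pos (subset_refl T)]

lemma inv2 (m g : Finset Ω → ℝ) (hg : ∀ T, g T = ∑ S ∈ T.powerset, m S) (S : Finset Ω) :
    m S = ∑ T ∈ S.powerset, (-1:ℝ)^(S.card - T.card) * g T := by
  have : ∀ T ∈ S.powerset, (-1:ℝ)^(S.card - T.card) * g T
      = ∑ U ∈ T.powerset, (-1:ℝ)^(S.card - T.card) * m U := by
    intro T _
    rw [hg, Finset.mul_sum]
  rw [Finset.sum_congr rfl this, swap_sum S (fun T U => (-1:ℝ)^(S.card - T.card) * m U)]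
  have h2 : ∀ U ∈ S.powerset, ∑ T ∈ S.powerset.filter (fun T => U ⊆ T),
      (-1:ℝ)^(S.card - T.card) * m U = (if U = S then 1 else 0) * m U := by
    intro U hU
    rw [← Finset.sum_mul, inner2 S U (Finset.mem_powerset.1 hU)]
  rw [Finset.sum_congr rfl h2]
  simp only [ite_mul, one_mul, zero_mul, Finset.sum_ite_eq', Finset.mem_powerset]
  rw [if_pos (subset_refl S)]

section MainLemmas

variable [Fintype Ω]

lemma belOf_eq (m : Finset Ω → ℝ) (A : Set Ω) :
    BelOf m A = ∑ S ∈ A.toFinset.powerset, m S := by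
  unfold BelOf
  congr 1
  ext S
  simp only [Finset.mem_filter, Finset.mem_univ, true_and, Finset.mem_powerset]
  rw [← Set.coe_toFinset A, Finset.coe_subset, Set.coe_toFinset]

lemma belOf_coe (m : Finset Ω → ℝ) (T : Finset Ω) :
    BelOf m ↑T = ∑ S ∈ T.powerset, m S := by
  unfold BelOf
  congr 1
  ext S
  simp

lemma inner_signs (N : ℕ) (J : Finset (Fin N)) :
    ∑ I ∈ ((Finset.univ : Finset (Finset (Fin N))).filter (fun I => I ≠ ∅)).filter
        (fun I => I ⊆ J), (-1:ℝ)^(I.card+1) = if J = ∅ then 0 else 1 := by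
  have hset : ((Finset.univ : Finset (Finset (Fin N))).filter (fun I => I ≠ ∅)).filter
      (fun I => I ⊆ J) = J.powerset.erase ∅ := by
    ext I
    simp only [Finset.mem_filter, Finset.mem_univ, true_and, Finset.mem_erase,
      Finset.mem_powerset]
  rw [hset]
  have h2 : ∑ I ∈ J.powerset.erase ∅, (-1:ℝ)^(I.card+1)
        + (-1:ℝ)^((∅:Finset (Fin N)).card+1)
      = ∑ I ∈ J.powerset, (-1:ℝ)^(I.card+1) :=
    Finset.sum_erase_add _ _ (Finset.empty_mem_powerset J)
  have h3 : ∑ I ∈ J.powerset, (-1:ℝ)^(I.card+1) = -(if J = ∅ then 1 else 0) := by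
    have hc : ∀ I ∈ J.powerset, (-1:ℝ)^(I.card+1) = -((-1:ℝ)^I.card) := by
      intro I _
      rw [pow_succ]; ring
    rw [Finset.sum_congr rfl hc, Finset.sum_neg_distrib, psum1]
    split_ifs <;> norm_num
  rw [h3] at h2
  simp only [Finset.card_empty, pow_one] at h2
  split_ifs with h <;> simp [h] at h2 ⊢ <;> linarith

lemma bba_isBelief (m : Finset Ω → ℝ) (hm : IsBBA m) : IsBeliefFunction (BelOf m) := by
  obtain ⟨hb, h0, h1⟩ := hm
  have hnn : ∀ A : Set Ω, 0 ≤ BelOf m A := fun A => by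
    rw [belOf_eq]; exact Finset.sum_nonneg fun S _ => (hb S).1
  refine ⟨fun A => ⟨hnn A, ?_⟩, ?_, ?_, ?_⟩
  · rw [belOf_eq, ← h1]
    exact Finset.sum_le_sum_of_subset_of_nonneg (Finset.subset_univ _)
      (fun S _ _ => (hb S).1)
  · rw [belOf_eq]
    simp [h0]
  · rw [show BelOf m Set.univ
        = ∑ S ∈ Finset.univ.filter (fun S : Finset Ω => (S:Set Ω) ⊆ Set.univ), m S from rfl,
      Finset.filter_true_of_mem (fun S _ => Set.subset_univ _)]
    exact h1
  · intro N A
    set J : Finset Ω → Finset (Fin N) :=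
      fun S => Finset.univ.filter (fun i => (S:Set Ω) ⊆ A i) with hJ
    have hBelOf : ∀ X : Set Ω, BelOf m X
        = ∑ S ∈ (Finset.univ : Finset (Finset Ω)), (if (S:Set Ω) ⊆ X then m S else 0) := by
      intro X; rw [BelOf, Finset.sum_filter]
    have hterm : ∀ I ∈ (Finset.univ : Finset (Finset (Fin N))).filter (fun I => I ≠ ∅),
        (-1:ℝ)^(I.card+1) * BelOf m (⋂ i ∈ I, A i)
        = ∑ S ∈ (Finset.univ : Finset (Finset Ω)),
            (if I ⊆ J S then (-1:ℝ)^(I.card+1) * m S else 0) := by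
      intro I _
      rw [hBelOf, Finset.mul_sum]
      refine Finset.sum_congr rfl fun S _ => ?_
      rw [mul_ite, mul_zero]
      have hcond : ((S:Set Ω) ⊆ ⋂ i ∈ I, A i) ↔ I ⊆ J S := by
        rw [Set.subset_iInter₂_iff]
        constructor
        · intro h i hi
          rw [hJ, Finset.mem_filter]
          exact ⟨Finset.mem_univ i, h i hi⟩
        · intro h i hi
          have := h hi
          rw [hJ, Finset.mem_filter] at this
          exact this.2
      rw [if_congr hcond rfl rfl]
    rw [Finset.sum_congr rfl hterm, Finset.sum_comm]
    have hS : ∀ S ∈ (Finset.univ : Finset (Finset Ω)),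
        ∑ I ∈ (Finset.univ : Finset (Finset (Fin N))).filter (fun I => I ≠ ∅),
          (if I ⊆ J S then (-1:ℝ)^(I.card+1) * m S else 0)
        = (if J S = ∅ then 0 else 1) * m S := by
      intro S _
      rw [← Finset.sum_filter, ← Finset.sum_mul, inner_signs]
    rw [Finset.sum_congr rfl hS]
    have heq2 : ∑ S ∈ (Finset.univ : Finset (Finset Ω)), (if J S = ∅ then 0 else 1) * m S
        = ∑ S ∈ (Finset.univ : Finset (Finset Ω)).filter (fun S => J S ≠ ∅), m S := by
      rw [Finset.sum_filter]
      refine Finset.sum_congr rfl fun S _ => ?_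
      split_ifs with h1' h2' <;> simp_all
    rw [heq2, BelOf]
    apply Finset.sum_le_sum_of_subset_of_nonneg
    · intro S hSmem
      rw [Finset.mem_filter] at hSmem ⊢
      refine ⟨Finset.mem_univ S, ?_⟩
      obtain ⟨i, hi⟩ := Finset.nonempty_iff_ne_empty.2 hSmem.2
      rw [hJ, Finset.mem_filter] at hi
      exact hi.2.trans (Set.subset_iUnion A i)
    · exact fun S _ _ => (hb S).1

lemma m_nonneg (Bel : Set Ω → ℝ) (hB : IsBeliefFunction Bel) (S : Finset Ω) :
    0 ≤ ∑ T ∈ S.powerset, (-1:ℝ)^(S.card - T.card) * Bel ↑T := by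
  obtain ⟨hb, h0, h1, hCMall⟩ := hB
  rcases Nat.lt_or_ge S.card 2 with hlt | hn
  · interval_cases h : S.card
    · rw [Finset.card_eq_zero] at h
      subst h
      simp [h0]
    · obtain ⟨a, rfl⟩ := Finset.card_eq_one.1 h
      have hps : ({a} : Finset Ω).powerset = {∅, {a}} := by
        ext T
        simp [Finset.subset_singleton_iff]
      rw [hps, Finset.sum_pair (Ne.symm (Finset.singleton_ne_empty a))]
      simp only [Finset.card_singleton, Finset.card_empty, Finset.coe_empty, h0,
        Finset.coe_singleton, mul_zero, Nat.sub_self, pow_zero, one_mul, zero_add]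
      exact (hb {a}).1
  · -- main case: card ≥ 2
    set n := S.card with hn'
    have hnt : Nontrivial (Fin n) := Fin.nontrivial_iff_two_le.2 hn
    set e : Fin n → Ω := fun i => ((S.equivFin.symm i : S) : Ω) with he'
    have he : Function.Injective e := fun i j h => by
      apply S.equivFin.symm.injective
      exact Subtype.ext h
    have heS : ∀ i, e i ∈ S := fun i => (S.equivFin.symm i).2
    have hsurj : ∀ x ∈ S, ∃ i, e i = x := fun x hx =>
      ⟨S.equivFin ⟨x, hx⟩, by
        show ((S.equivFin.symm (S.equivFin ⟨x, hx⟩) : S) : Ω) = x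
        rw [Equiv.symm_apply_apply]⟩
    set A : Fin n → Set Ω := fun i => (↑S : Set Ω) \ {e i} with hA'
    have hCM := hCMall n A
    have hUnion : (⋃ i, A i) = (↑S : Set Ω) := by
      ext x
      simp only [Set.mem_iUnion, hA', Set.mem_diff, Set.mem_singleton_iff, Finset.mem_coe]
      constructor
      · rintro ⟨i, hxS, _⟩; exact hxS
      · intro hxS
        obtain ⟨i, hi⟩ := hsurj x hxS
        obtain ⟨j, hj⟩ := exists_ne i
        exact ⟨j, hxS, fun h => hj (he (hi.trans h)).symm⟩
    have hInter : ∀ I : Finset (Fin n), I ≠ ∅ → (⋂ i ∈ I, A i) = ↑(S \ I.image e) := by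
      intro I hI
      obtain ⟨i0, hi0⟩ := Finset.nonempty_iff_ne_empty.2 hI
      ext x
      simp only [Set.mem_iInter, hA', Set.mem_diff, Set.mem_singleton_iff, Finset.mem_coe,
        Finset.mem_sdiff, Finset.mem_image]
      constructor
      · intro h
        refine ⟨(h i0 hi0).1, ?_⟩
        rintro ⟨i, hiI, hix⟩
        exact (h i hiI).2 hix.symm
      · rintro ⟨hxS, hnx⟩ i hiI
        exact ⟨hxS, fun h => hnx ⟨i, hiI, h.symm⟩⟩
    have hsum : ∑ I ∈ (Finset.univ : Finset (Finset (Fin n))).filter (fun I => I ≠ ∅),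
        (-1:ℝ)^(I.card+1) * Bel (⋂ i ∈ I, A i)
        = ∑ T ∈ S.powerset.erase S, (-1:ℝ)^(S.card - T.card + 1) * Bel ↑T := by
      refine Finset.sum_nbij' (fun I => S \ I.image e)
        (fun T => Finset.univ.filter (fun i => e i ∉ T)) ?_ ?_ ?_ ?_ ?_
      · intro I hI
        rw [Finset.mem_filter] at hI
        show S \ I.image e ∈ S.powerset.erase S
        rw [Finset.mem_erase, Finset.mem_powerset]
        refine ⟨?_, Finset.sdiff_subset⟩
        obtain ⟨i0, hi0⟩ := Finset.nonempty_iff_ne_empty.2 hI.2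
        intro hcon
        have hmem : e i0 ∈ S \ I.image e := by rw [hcon]; exact heS i0
        rw [Finset.mem_sdiff] at hmem
        exact hmem.2 (Finset.mem_image_of_mem e hi0)
      · intro T hT
        rw [Finset.mem_erase, Finset.mem_powerset] at hT
        show Finset.univ.filter (fun i => e i ∉ T) ∈ Finset.univ.filter (fun I => I ≠ ∅)
        rw [Finset.mem_filter]
        refine ⟨Finset.mem_univ _, ?_⟩
        have : ∃ x ∈ S, x ∉ T := by
          by_contra hcon
          push_neg at hcon
          exact hT.1 (subset_antisymm hT.2 hcon)
        obtain ⟨x, hxS, hxT⟩ := this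
        obtain ⟨i, hi⟩ := hsurj x hxS
        intro hcon
        have : i ∈ Finset.univ.filter (fun i => e i ∉ T) := by
          rw [Finset.mem_filter]
          exact ⟨Finset.mem_univ _, by rw [hi]; exact hxT⟩
        rw [hcon] at this
        exact absurd this (Finset.notMem_empty i)
      · intro I hI
        show Finset.univ.filter (fun i => e i ∉ S \ I.image e) = I
        ext i
        simp only [Finset.mem_filter, Finset.mem_univ, true_and, Finset.mem_sdiff,
          Finset.mem_image, not_and, not_not]
        constructor
        · intro h
          obtain ⟨j, hjI, hje⟩ := h (heS i)
          rwa [he hje] at hjI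
        · intro hiI _
          exact ⟨i, hiI, rfl⟩
      · intro T hT
        rw [Finset.mem_erase, Finset.mem_powerset] at hT
        have himg : (Finset.univ.filter (fun i => e i ∉ T)).image e = S \ T := by
          ext x
          simp only [Finset.mem_image, Finset.mem_filter, Finset.mem_univ, true_and,
            Finset.mem_sdiff]
          constructor
          · rintro ⟨i, hiT, rfl⟩
            exact ⟨heS i, hiT⟩
          · rintro ⟨hxS, hxT⟩
            obtain ⟨i, hi⟩ := hsurj x hxS
            exact ⟨i, by rw [hi]; exact hxT, hi⟩
        show S \ _ = T
        rw [himg, Finset.sdiff_sdiff_self_left, Finset.inter_eq_right.2 hT.2]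
      · intro I hI
        rw [Finset.mem_filter] at hI
        have hcard : (S \ I.image e).card = S.card - I.card := by
          rw [Finset.card_sdiff_of_subset, Finset.card_image_of_injective I he]
          intro x hx
          rw [Finset.mem_image] at hx
          obtain ⟨i, _, rfl⟩ := hx
          exact heS i
        rw [hInter I hI.2]
        congr 2
        rw [hcard]
        have hle : I.card ≤ S.card := by
          rw [← Finset.card_image_of_injective I he]
          apply Finset.card_le_card
          intro x hx
          rw [Finset.mem_image] at hx
          obtain ⟨i, _, rfl⟩ := hx
          exact heS i
        omega
    rw [hUnion, hsum] at hCM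
    have hsplit : ∑ T ∈ S.powerset, (-1:ℝ)^(S.card - T.card) * Bel ↑T
        = (-1:ℝ)^(S.card - S.card) * Bel ↑S
          + ∑ T ∈ S.powerset.erase S, (-1:ℝ)^(S.card - T.card) * Bel ↑T :=
      (Finset.add_sum_erase _ _ (Finset.mem_powerset_self S)).symm
    have hneg : ∑ T ∈ S.powerset.erase S, (-1:ℝ)^(S.card - T.card) * Bel ↑T
        = -∑ T ∈ S.powerset.erase S, (-1:ℝ)^(S.card - T.card + 1) * Bel ↑T := by
      rw [← Finset.sum_neg_distrib]
      refine Finset.sum_congr rfl fun T _ => ?_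
      rw [pow_succ]; ring
    rw [hsplit, hneg, Nat.sub_self, pow_zero, one_mul]
    linarith

lemma prob_sum (Bel : Set Ω → ℝ) (hP : IsProbDist Bel) (T : Finset Ω) :
    Bel ↑T = ∑ ω ∈ T, Bel {ω} := by
  induction T using Finset.induction_on with
  | empty => simpa using hP.2.1
  | @insert a T' ha ih =>
    rw [Finset.coe_insert, Set.insert_eq, hP.2.2.2]
    have hint : ({a} : Set Ω) ∩ ↑T' = ∅ := by
      rw [Set.singleton_inter_eq_empty]
      simpa using ha
    rw [hint, hP.2.1, ih, Finset.sum_insert ha]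
    ring

lemma sum_singletons (T : Finset Ω) (f : Finset Ω → ℝ) :
    ∑ S ∈ T.powerset.filter (fun S => S.card = 1), f S = ∑ ω ∈ T, f {ω} := by
  have himg : T.powerset.filter (fun S => S.card = 1)
      = T.image (fun ω => ({ω} : Finset Ω)) := by
    ext S
    simp only [Finset.mem_filter, Finset.mem_powerset, Finset.mem_image, Finset.card_eq_one]
    constructor
    · rintro ⟨hsub, a, rfl⟩
      exact ⟨a, hsub (Finset.mem_singleton_self a), rfl⟩
    · rintro ⟨a, haT, rfl⟩
      exact ⟨Finset.singleton_subset_iff.2 haT, a, rfl⟩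
  rw [himg, Finset.sum_image]
  intro a _ b _ h
  exact Finset.singleton_injective h

end MainLemmas

theorem beliefFunction_iff_bba [Fintype Ω] [Nonempty Ω] (Bel : Set Ω → ℝ) :
    (IsBeliefFunction Bel ↔
      ∃ m : Finset Ω → ℝ, IsBBA m ∧ ∀ A : Set Ω, Bel A = BelOf m A) ∧
    (∀ m₁ m₂ : Finset Ω → ℝ, IsBBA m₁ → IsBBA m₂ →
      (∀ A : Set Ω, BelOf m₁ A = BelOf m₂ A) → m₁ = m₂) ∧
    (∀ m : Finset Ω → ℝ, IsBBA m → (∀ A : Set Ω, Bel A = BelOf m A) →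
      (IsProbDist Bel ↔ ∀ S : Finset Ω, m S ≠ 0 → S.card = 1)) := by
  have huniq : ∀ m₁ m₂ : Finset Ω → ℝ, IsBBA m₁ → IsBBA m₂ →
      (∀ A : Set Ω, BelOf m₁ A = BelOf m₂ A) → m₁ = m₂ := by
    intro m₁ m₂ _ _ h
    funext S
    have e1 : ∀ T : Finset Ω, BelOf m₁ ↑T = ∑ U ∈ T.powerset, m₁ U :=
      fun T => belOf_coe m₁ T
    have e2 : ∀ T : Finset Ω, BelOf m₁ ↑T = ∑ U ∈ T.powerset, m₂ U :=
      fun T => (h ↑T).trans (belOf_coe m₂ T)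
    rw [inv2 m₁ (fun T => BelOf m₁ ↑T) e1 S, inv2 m₂ (fun T => BelOf m₁ ↑T) e2 S]
  refine ⟨⟨?_, ?_⟩, huniq, ?_⟩
  · -- belief function gives bba
    intro hB
    set m : Finset Ω → ℝ := fun S => ∑ T ∈ S.powerset, (-1:ℝ)^(S.card - T.card) * Bel ↑T
      with hmdef
    have hrec : ∀ T : Finset Ω, ∑ S ∈ T.powerset, m S = Bel ↑T :=
      fun T => inv1 (fun U => Bel ↑U) T
    have hnn : ∀ S, 0 ≤ m S := m_nonneg Bel hB
    have hsum : ∑ S : Finset Ω, m S = 1 := by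
      rw [← Finset.powerset_univ, hrec, Finset.coe_univ]
      exact hB.2.2.1
    refine ⟨m, ⟨fun S => ⟨hnn S, ?_⟩, ?_, hsum⟩, ?_⟩
    · calc m S ≤ ∑ S : Finset Ω, m S :=
            Finset.single_le_sum (fun i _ => hnn i) (Finset.mem_univ S)
        _ = 1 := hsum
    · show ∑ T ∈ (∅:Finset Ω).powerset, (-1:ℝ)^((∅:Finset Ω).card - T.card) * Bel ↑T = 0
      rw [Finset.powerset_empty, Finset.sum_singleton]
      simp [hB.2.1]
    · intro A
      rw [belOf_eq, hrec, Set.coe_toFinset]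
  · -- bba gives belief function
    rintro ⟨m, hm, hA⟩
    have hBelEq : Bel = BelOf m := funext hA
    rw [hBelEq]
    exact bba_isBelief m hm
  · -- probability distributions
    intro m hm hA
    constructor
    · intro hP
      let m' : Finset Ω → ℝ := fun S : Finset Ω => if S.card = 1 then Bel ↑S else 0
      have hm'def : m' = fun S : Finset Ω => if S.card = 1 then Bel ↑S else 0 := rfl
      have hBA' : ∀ A : Set Ω, BelOf m' A = Bel A := by
        intro A
        rw [belOf_eq]
        calc ∑ S ∈ A.toFinset.powerset, m' S
            = ∑ S ∈ A.toFinset.powerset.filter (fun S => S.card = 1), Bel ↑S := by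
              rw [Finset.sum_filter]
          _ = ∑ ω ∈ A.toFinset, Bel ↑({ω} : Finset Ω) := sum_singletons _ _
          _ = ∑ ω ∈ A.toFinset, Bel {ω} :=
              Finset.sum_congr rfl fun ω _ => by rw [Finset.coe_singleton]
          _ = Bel ↑(A.toFinset) := (prob_sum Bel hP A.toFinset).symm
          _ = Bel A := by rw [Set.coe_toFinset]
      have hm'bba : IsBBA m' := by
        refine ⟨fun S => ?_, ?_, ?_⟩
        · simp only [hm'def]
          split_ifs with h
          · exact hP.1 _
          · exact ⟨le_refl 0, by norm_num⟩
        · simp [hm'def]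
        · have h1 := hBA' Set.univ
          rw [hP.2.2.1] at h1
          rw [show BelOf m' Set.univ = ∑ S ∈ Finset.univ.filter
              (fun S : Finset Ω => (S:Set Ω) ⊆ Set.univ), m' S from rfl,
            Finset.filter_true_of_mem (fun S _ => Set.subset_univ _)] at h1
          exact h1
      have heqm : m = m' := huniq m m' hm hm'bba (fun A => by rw [← hA A, hBA' A])
      intro S hS
      rw [heqm] at hS
      by_contra hc
      apply hS
      simp only [hm'def]
      exact if_neg hc
    · intro hsupp
      have hBA : ∀ A : Set Ω,
          Bel A = ∑ ω ∈ Finset.univ, A.indicator (fun ω => m {ω}) ω := by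
        intro A
        rw [hA, belOf_eq,
          ← Finset.sum_filter_of_ne (fun S _ hne => hsupp S hne), sum_singletons]
        have h1 : ∑ ω ∈ A.toFinset, m {ω}
            = ∑ ω ∈ Finset.univ.filter (fun ω => ω ∈ A), m {ω} := by
          congr 1
          ext x
          simp
        rw [h1, Finset.sum_filter]
        exact Finset.sum_congr rfl fun ω _ => (Set.indicator_apply A (fun ω => m {ω}) ω).symm
      have hbel := bba_isBelief m hm
      have hBelEq : Bel = BelOf m := funext hA
      refine ⟨fun A => by rw [hBelEq]; exact hbel.1 A,
        by rw [hBelEq]; exact hbel.2.1,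
        by rw [hBelEq]; exact hbel.2.2.1, ?_⟩
      intro A C
      rw [hBA (A ∪ C), hBA (A ∩ C), hBA A, hBA C]
      have hpt : ∀ ω : Ω, (A ∪ C).indicator (fun ω => m {ω}) ω
            + (A ∩ C).indicator (fun ω => m {ω}) ω
          = A.indicator (fun ω => m {ω}) ω + C.indicator (fun ω => m {ω}) ω := by
        intro ω
        by_cases h1 : ω ∈ A <;> by_cases h2 : ω ∈ C <;>
          simp [Set.indicator_apply, h1, h2, Set.mem_union, Set.mem_inter_iff]
      have h2 : ∑ ω ∈ Finset.univ, ((A ∪ C).indicator (fun ω => m {ω}) ω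
            + (A ∩ C).indicator (fun ω => m {ω}) ω)
          = ∑ ω ∈ Finset.univ, (A.indicator (fun ω => m {ω}) ω
            + C.indicator (fun ω => m {ω}) ω) :=
        Finset.sum_congr rfl fun ω _ => hpt ω
      rw [Finset.sum_add_distrib, Finset.sum_add_distrib] at h2
      linarith
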